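/- arXiv:1805.07518 — 8 statements merged into one kernel-verified Lean document; each statement's English description precedes it below -/
import Mathlib

section
/- In Chu(H,0) over a Heyting algebra H, define P ⊗ Q = (P⁺ ∧ Q⁺, (P⁺ → Q⁻) ∧ (Q⁺ → P⁻)). Then ⊗ is a well-defined operation on Chu(H,0) (i.e. (P⊗Q)⁺ ∧ (P⊗Q)⁻ = ⊥), is commutative and associative, and has unit (⊤,⊥). -/
/-- A point of `Chu(H,0)`: a pair `(P⁺, P⁻)` with `P⁺ ⊓ P⁻ = ⊥`. -/
def IsChu {H : Type*} [HeytingAlgebra H] (P : H × H) : Prop := P.1 ⊓ P.2 = ⊥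

/-- The multiplicative conjunction `P ⊗ Q = (P⁺ ∧ Q⁺, (P⁺ → Q⁻) ∧ (Q⁺ → P⁻))`. -/
def chuTensor {H : Type*} [HeytingAlgebra H] (P Q : H × H) : H × H :=
  (P.1 ⊓ Q.1, (P.1 ⇨ Q.2) ⊓ (Q.1 ⇨ P.2))

/-- `⊗` is well-defined on `Chu(H,0)`, commutative, associative, and has unit `(⊤,⊥)`. -/
theorem chuTensor_monoid {H : Type*} [HeytingAlgebra H] :
    (∀ P Q : H × H, IsChu P → IsChu Q → IsChu (chuTensor P Q)) ∧
    (∀ P Q : H × H, chuTensor P Q = chuTensor Q P) ∧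
    (∀ P Q R : H × H, chuTensor (chuTensor P Q) R = chuTensor P (chuTensor Q R)) ∧
    (∀ P : H × H, IsChu P → chuTensor P (⊤, ⊥) = P) := by
  refine ⟨?_, ?_, ?_, ?_⟩
  · intro P Q hP hQ
    unfold IsChu chuTensor at *
    apply le_antisymm _ bot_le
    calc P.1 ⊓ Q.1 ⊓ ((P.1 ⇨ Q.2) ⊓ (Q.1 ⇨ P.2)) ≤ Q.1 ⊓ (P.1 ⊓ (P.1 ⇨ Q.2)) := by
          exact le_inf (inf_le_left.trans inf_le_right)
            (le_inf (inf_le_left.trans inf_le_left) (inf_le_right.trans inf_le_left))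
      _ ≤ Q.1 ⊓ Q.2 := inf_le_inf_left _ (by simp [inf_himp])
      _ = ⊥ := hQ
  · intro P Q
    simp [chuTensor, inf_comm]
  · intro P Q R
    simp only [chuTensor, Prod.mk.injEq]
    constructor
    · exact inf_assoc _ _ _
    · simp only [himp_inf_distrib, himp_himp]
      rw [inf_comm R.1 P.1, inf_comm R.1 Q.1]
      ac_rfl
  · intro P hP
    have h : P.2 ≤ P.1 ⇨ ⊥ := by
      rw [le_himp_iff, inf_comm]
      exact hP.le
    simp only [chuTensor, inf_top_eq, top_himp]
    rw [inf_eq_right.mpr h]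
end

section
/- In Chu(H,0) over a Heyting algebra H, with P ⊸ Q = ((P⁺ → Q⁺) ∧ (Q⁻ → P⁻), P⁺ ∧ Q⁻) and P ⊗ Q = (P⁺ ∧ Q⁺, (P⁺ → Q⁻) ∧ (Q⁺ → P⁻)), the adjunction holds: P ⊗ Q ≤ R if and only if P ≤ Q ⊸ R. -/
/-- The Chu order: `P ≤ Q` iff `P⁺ ≤ Q⁺` and `Q⁻ ≤ P⁻`. -/
def chuLe {H : Type*} [HeytingAlgebra H] (P Q : H × H) : Prop := P.1 ≤ Q.1 ∧ Q.2 ≤ P.2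

/-- `P ⊸ Q = ((P⁺ → Q⁺) ∧ (Q⁻ → P⁻), P⁺ ∧ Q⁻)`. -/
def chuLimp {H : Type*} [HeytingAlgebra H] (P Q : H × H) : H × H :=
  ((P.1 ⇨ Q.1) ⊓ (Q.2 ⇨ P.2), P.1 ⊓ Q.2)

/-- The adjunction between `⊗` and `⊸`: `P ⊗ Q ≤ R` iff `P ≤ Q ⊸ R`. -/
theorem chuTensor_limp_adjunction {H : Type*} [HeytingAlgebra H]
    (P Q R : H × H) (hP : IsChu P) (hQ : IsChu Q) (hR : IsChu R) :
    chuLe (chuTensor P Q) R ↔ chuLe P (chuLimp Q R) := by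
  simp only [chuLe, chuTensor, chuLimp, le_inf_iff, le_himp_iff]
  constructor
  · rintro ⟨h1, h2, h3⟩
    exact ⟨⟨h1, (inf_comm _ _).trans_le h2⟩, (inf_comm _ _).trans_le h3⟩
  · rintro ⟨⟨h1, h2⟩, h3⟩
    exact ⟨h1, (inf_comm _ _).trans_le h2, (inf_comm _ _).trans_le h3⟩
end

section
/- In Chu(H,0) over a Heyting algebra H, define !P = (P⁺, ¬P⁺) where ¬ denotes Heyting negation. Then ! is a comonad on Chu(H,0) (i.e. !!P = !P and !P ≤ P) satisfying the Seely condition !(P ⊓ Q) = !P ⊗ !Q, where ⊓ is the lattice meet and ⊗ is the multiplicative conjunction (P⁺ ∧ Q⁺, (P⁺ → Q⁻) ∧ (Q⁺ → P⁻)). -/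
/-- The exponential `!P = (P⁺, ¬P⁺)` with `¬` the Heyting negation. -/
def chuBang {H : Type*} [HeytingAlgebra H] (P : H × H) : H × H := (P.1, P.1ᶜ)

/-- `!` is a Seely comonad on `Chu(H,0)`: it is well-defined, idempotent,
a copointed endofunctor (`!P ≤ P`), and satisfies `!(P ⊓ Q) = !P ⊗ !Q` where
`P ⊓ Q = (P⁺ ∧ Q⁺, P⁻ ∨ Q⁻)` is the lattice meet. -/
theorem chuBang_seely_comonad {H : Type*} [HeytingAlgebra H]
    (P Q : H × H) (hP : IsChu P) (hQ : IsChu Q) :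
    IsChu (chuBang P) ∧
    chuBang (chuBang P) = chuBang P ∧
    chuLe (chuBang P) P ∧
    chuBang (P.1 ⊓ Q.1, P.2 ⊔ Q.2) = chuTensor (chuBang P) (chuBang Q) := by
  refine ⟨inf_compl_eq_bot, rfl, ⟨le_refl _, ?_⟩, ?_⟩
  · exact le_compl_iff_disjoint_left.2 (disjoint_iff.2 (by unfold IsChu at hP; exact hP))
  · simp only [chuBang, chuTensor, Prod.mk.injEq, true_and]
    rw [← himp_bot, ← himp_bot, ← himp_bot, himp_himp, himp_himp,
      inf_comm Q.1 P.1, inf_idem]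
end

section
/- In Chu(H,0) over a Heyting algebra H, the multiplicative conjunction satisfies the squaring-exponential law: P ⊗ P = !P, where !P = (P⁺, ¬P⁺) and P ⊗ Q = (P⁺ ∧ Q⁺, (P⁺ → Q⁻) ∧ (Q⁺ → P⁻)). Consequently the weak idempotence law P ⊗ P ⊗ P = P ⊗ P holds. -/
lemma himp_eq_compl_of_disj {H : Type*} [HeytingAlgebra H] {a b : H}
    (h : a ⊓ b = ⊥) : a ⇨ b = aᶜ := by
  apply le_antisymm
  · rw [← himp_bot, ← h]
    exact le_himp_iff.2 (le_inf inf_le_right ((inf_comm _ _).trans_le inf_himp_le))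
  · rw [← himp_bot]
    exact himp_le_himp_left bot_le

/-- The squaring-exponential law `P ⊗ P = !P` in `Chu(H,0)`, and the consequent
weak idempotence `P ⊗ P ⊗ P = P ⊗ P`. -/
theorem chu_squaring_exponential {H : Type*} [HeytingAlgebra H]
    (P : H × H) (hP : IsChu P) :
    chuTensor P P = chuBang P ∧
    chuTensor (chuTensor P P) P = chuTensor P P := by
  have h1 : chuTensor P P = chuBang P := by
    simp [chuTensor, chuBang, himp_eq_compl_of_disj hP]
  refine ⟨h1, ?_⟩
  rw [h1]
  simp [chuTensor, chuBang, himp_eq_compl_of_disj hP, ← himp_bot, himp_himp]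
end

section
/- In Chu(H,0) over a Heyting algebra H, with !P = (P⁺, ¬P⁺) and ?P = (¬P⁻, P⁻), the distributive exponentials law holds: ?!P ≤ !?P. -/
/-- The dual exponential `?P = (¬P⁻, P⁻)`. -/
def chuWn {H : Type*} [HeytingAlgebra H] (P : H × H) : H × H := (P.2ᶜ, P.2)

/-- The distributive exponentials law `?!P ≤ !?P` in `Chu(H,0)`. -/
theorem chu_distributive_exponentials {H : Type*} [HeytingAlgebra H]
    (P : H × H) (hP : IsChu P) :
    chuLe (chuWn (chuBang P)) (chuBang (chuWn P)) := by
  have h1 : P.1 ≤ P.2ᶜ := le_compl_iff_disjoint_right.mpr (disjoint_iff.mpr hP)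
  have h2 : P.2 ≤ P.1ᶜ := le_compl_iff_disjoint_left.mpr (disjoint_iff.mpr hP)
  refine ⟨?_, ?_⟩
  · calc P.1ᶜᶜ ≤ P.2ᶜᶜᶜ := compl_le_compl (compl_le_compl h1)
      _ = P.2ᶜ := compl_compl_compl _
  · calc P.2ᶜᶜ ≤ P.1ᶜᶜᶜ := compl_le_compl (compl_le_compl h2)
      _ = P.1ᶜ := compl_compl_compl _
end

section
/- In any semicartesian ∗-autonomous lattice with a Seely comonad satisfying the squaring law !P = P ⊗ P, exact exponentials hold: !(P ⊔ Q) = !P ⊔ !Q. -/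
/-- In a semicartesian ∗-autonomous lattice with a Seely comonad `!` satisfying the
squaring law `!P = P ⊗ P`, exact exponentials hold: `!(P ⊔ Q) = !P ⊔ !Q`. -/
theorem squaring_implies_exact_exponentials {L : Type*} [Lattice L] [OrderTop L]
    (tensor : L → L → L) (bang : L → L)
    (hcomm : ∀ P Q, tensor P Q = tensor Q P)
    (hassoc : ∀ P Q R, tensor (tensor P Q) R = tensor P (tensor Q R))
    (hunit : ∀ P, tensor P ⊤ = P)
    (hdist : ∀ P Q R, tensor P (Q ⊔ R) = tensor P Q ⊔ tensor P R)
    (hidem : ∀ P, bang (bang P) = bang P)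
    (hcounit : ∀ P, bang P ≤ P)
    (hsquare : ∀ P, bang P = tensor P P) :
    ∀ P Q, bang (P ⊔ Q) = bang P ⊔ bang Q := by
  -- monotonicity in the right argument
  have mono : ∀ A B C : L, B ≤ C → tensor A B ≤ tensor A C := by
    intro A B C h
    have : tensor A C = tensor A B ⊔ tensor A C := by
      rw [← hdist, sup_eq_right.mpr h]
    rw [this]; exact le_sup_left
  have hdist' : ∀ P Q R : L, tensor (Q ⊔ R) P = tensor Q P ⊔ tensor R P := by
    intro P Q R
    rw [hcomm, hdist, hcomm P Q, hcomm P R]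
  have leL : ∀ A B : L, tensor A B ≤ A := by
    intro A B
    calc tensor A B ≤ tensor A ⊤ := mono A B ⊤ le_top
    _ = A := hunit A
  have leR : ∀ A B : L, tensor A B ≤ B := by
    intro A B; rw [hcomm]; exact leL B A
  -- products with two copies of the same factor
  have h2 : ∀ P A B : L, tensor (tensor P A) (tensor P B) ≤ bang P := by
    intro P A B
    have e : tensor (tensor P A) (tensor P B) = tensor (tensor P P) (tensor A B) := by
      rw [hassoc, ← hassoc A P B, hcomm A P, hassoc P A B, ← hassoc]
    rw [e, hsquare]
    exact leL _ _
  intro P Q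
  apply le_antisymm
  · have expand : bang (P ⊔ Q)
        = tensor (tensor (P ⊔ Q) (P ⊔ Q)) (tensor (P ⊔ Q) (P ⊔ Q)) := by
      rw [← hsquare, ← hsquare, hidem]
    rw [expand]
    have sq : tensor (P ⊔ Q) (P ⊔ Q) = tensor P P ⊔ (tensor P Q ⊔ tensor Q Q) := by
      rw [hdist, hdist', hdist', hcomm Q P]
      rw [sup_assoc, ← sup_assoc (tensor P Q), sup_idem]
    rw [sq]
    simp only [hdist, hdist', sup_le_iff]
    refine ⟨⟨?_, ?_, ?_⟩, ⟨?_, ?_, ?_⟩, ?_, ?_, ?_⟩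
    · exact le_sup_of_le_left (by rw [hsquare]; exact leL _ _)
    · exact le_sup_of_le_left (by rw [hsquare]; exact leR _ _)
    · exact le_sup_of_le_left (by rw [hsquare]; exact leR _ _)
    · exact le_sup_of_le_left (by rw [hsquare]; exact leL _ _)
    · exact le_sup_of_le_left (h2 P Q Q)
    · exact le_sup_of_le_right (by rw [hsquare]; exact leL _ _)
    · exact le_sup_of_le_right (by rw [hsquare]; exact leR _ _)
    · exact le_sup_of_le_right (by rw [hsquare]; exact leR _ _)
    · exact le_sup_of_le_right (by rw [hsquare]; exact leL _ _)
  · apply sup_le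
    · rw [hsquare, hsquare]
      calc tensor P P ≤ tensor P (P ⊔ Q) := mono _ _ _ le_sup_left
      _ = tensor (P ⊔ Q) P := hcomm _ _
      _ ≤ tensor (P ⊔ Q) (P ⊔ Q) := mono _ _ _ le_sup_left
    · rw [hsquare, hsquare]
      calc tensor Q Q ≤ tensor Q (P ⊔ Q) := mono _ _ _ le_sup_right
      _ = tensor (P ⊔ Q) Q := hcomm _ _
      _ ≤ tensor (P ⊔ Q) (P ⊔ Q) := mono _ _ _ le_sup_right
end

section
/- In a semicartesian ∗-autonomous lattice where ⊗ distributes over joins, the Lafont condition (P ⊸ P⊗P) ≤ (P ⊸ !P) implies that every decidable proposition is affirmative: if ⊤ ≤ P ⊔ ¬ₗP then ⊤ ≤ P ⊸ !P. Equivalently, P ⊗ (P ⊔ ¬ₗP) ≤ P ⊗ P. -/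
/-- In a semicartesian ∗-autonomous lattice where `⊗` distributes over joins,
the Lafont condition `(P ⊸ P ⊗ P) ≤ (P ⊸ !P)` implies that every decidable
proposition is affirmative: if `⊤ ≤ P ⊔ ¬ₗP` then `⊤ ≤ P ⊸ !P`; equivalently,
`P ⊗ (P ⊔ ¬ₗP) ≤ P ⊗ P`. -/
theorem lafont_decidable_implies_affirmative {L : Type*} [Lattice L] [BoundedOrder L]
    (tensor limp : L → L → L) (neg bang : L → L)
    (hcomm : ∀ P Q, tensor P Q = tensor Q P)
    (hassoc : ∀ P Q R, tensor (tensor P Q) R = tensor P (tensor Q R))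
    (hunit : ∀ P, tensor P ⊤ = P)
    (hadj : ∀ P Q R, tensor P Q ≤ R ↔ P ≤ limp Q R)
    (hinv : ∀ P, neg (neg P) = P)
    (hcontr : ∀ P, tensor P (neg P) ≤ ⊥)
    (hdist : ∀ P Q R, tensor P (Q ⊔ R) = tensor P Q ⊔ tensor P R)
    (hlafont : ∀ P, limp P (tensor P P) ≤ limp P (bang P)) :
    (∀ P, tensor P (P ⊔ neg P) ≤ tensor P P) ∧
    (∀ P, ⊤ ≤ P ⊔ neg P → ⊤ ≤ limp P (bang P)) := by
  have hmono : ∀ P X Y : L, X ≤ Y → tensor P X ≤ tensor P Y := by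
    intro P X Y h
    rw [hcomm P X, hcomm P Y]
    rw [hadj]
    exact le_trans h ((hadj Y P (tensor Y P)).mp le_rfl)
  have h1 : ∀ P, tensor P (P ⊔ neg P) ≤ tensor P P := by
    intro P
    rw [hdist]
    exact sup_le le_rfl (le_trans (hcontr P) bot_le)
  refine ⟨h1, fun P h => ?_⟩
  have hP : P ≤ tensor P P := by
    calc P = tensor P ⊤ := (hunit P).symm
    _ ≤ tensor P (P ⊔ neg P) := hmono P ⊤ _ h
    _ ≤ tensor P P := h1 P
  have : tensor ⊤ P ≤ tensor P P := by rw [hcomm, hunit]; exact hP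
  exact le_trans ((hadj _ _ _).mp this) (hlafont P)
end

section
/- Let G be a group (in intuitionistic logic) equipped with a binary relation ≠ that is translation invariant in the sense that x·u ≠ x·v → u ≠ v, x·u ≠ y·u → x ≠ y, and x⁻¹ ≠ y⁻¹ → x ≠ y. Then ≠ satisfies the cotransitivity-like condition (x·u ≠ y·v → (x ≠ y) ∨ (u ≠ v)) if and only if ≠ is an apartness relation (i.e. x ≠ z → (x ≠ y) ∨ (y ≠ z) for all y), assuming ≠ is symmetric and irreflexive. -/
/-- For a group `G` with a symmetric irreflexive translation-invariant relation `≠`,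
the strong condition `x·u ≠ y·v → (x ≠ y) ∨ (u ≠ v)` holds iff `≠` is an apartness
relation (`x ≠ z → (x ≠ y) ∨ (y ≠ z)`). -/
theorem group_strong_iff_apartness {G : Type*} [Group G] (r : G → G → Prop)
    (hsymm : ∀ x y, r x y → r y x)
    (hirr : ∀ x, ¬ r x x)
    (hmulL : ∀ x u v : G, r (x * u) (x * v) → r u v)
    (hmulR : ∀ x y u : G, r (x * u) (y * u) → r x y)
    (hinv : ∀ x y : G, r x⁻¹ y⁻¹ → r x y) :
    (∀ x y u v : G, r (x * u) (y * v) → r x y ∨ r u v) ↔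
    (∀ x y z : G, r x z → r x y ∨ r y z) := by
  constructor
  · intro hs x y z hxz
    have h1 : r (x * 1) (y * (y⁻¹ * z)) := by
      simpa [mul_assoc] using hxz
    rcases hs x y 1 (y⁻¹ * z) h1 with h | h
    · exact Or.inl h
    · have h2 : r (y⁻¹ * y) (y⁻¹ * z) := by simpa using h
      rcases hs y⁻¹ y⁻¹ y z h2 with h3 | h3
      · exact absurd h3 (hirr _)
      · exact Or.inr h3
  · intro ha x y u v h
    rcases ha (x * u) (y * u) (y * v) h with h1 | h1
    · exact Or.inl (hmulR x y u h1)
    · exact Or.inr (hmulL y u v h1)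
end
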